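/- Let R be a linearly topologized, Hausdorff, complete ring and m a closed ideal of R such that every element of m is topologically nilpotent. Let f = (f_1, ..., f_n) be an n-tuple of restricted power series over R in n variables with f(0) ∈ m^n and Jacobian determinant J(0) a unit in R. Then f induces a bijection of m^n onto itself. -/

import Mathlib

open Filter Topology

/-- Evaluation of a multivariate power series at a point, as an (unconditional) sum. -/
noncomputable def MvPowerSeries.evalAt {R : Type*} [CommRing R] [UniformSpace R] {n : ℕ}
    (f : MvPowerSeries (Fin n) R) (x : Fin n → R) : R :=
  ∑' d : Fin n →₀ ℕ, MvPowerSeries.coeff d f * ∏ i, x i ^ d i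

set_option linter.unusedSectionVars false

namespace RPS

section Basic
variable {R : Type*} [CommRing R] [UniformSpace R] [IsUniformAddGroup R] [IsTopologicalRing R]
    [T2Space R] [CompleteSpace R]

lemma exists_openIdeal (hlin : ∀ s ∈ 𝓝 (0 : R), ∃ I : Ideal R, (I : Set R) ⊆ s ∧ (I : Set R) ∈ 𝓝 0)
    {s : Set R} (hs : s ∈ 𝓝 (0 : R)) :
    ∃ I : Ideal R, (I : Set R) ⊆ s ∧ (I : Set R) ∈ 𝓝 0 ∧ IsOpen (I : Set R) ∧
      IsClosed (I : Set R) := by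
  obtain ⟨I, hIs, hI⟩ := hlin s hs
  have hopen : IsOpen (I : Set R) := AddSubgroup.isOpen_of_mem_nhds I.toAddSubgroup hI
  exact ⟨I, hIs, hI, hopen, AddSubgroup.isClosed_of_isOpen I.toAddSubgroup hopen⟩

lemma eq_zero_of_forall_mem
    (hlin : ∀ s ∈ 𝓝 (0 : R), ∃ I : Ideal R, (I : Set R) ⊆ s ∧ (I : Set R) ∈ 𝓝 0)
    {z : R} (hz : ∀ I : Ideal R, (I : Set R) ∈ 𝓝 0 → z ∈ I) : z = 0 := by
  have hcl : z ∈ closure ({0} : Set R) := by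
    rw [mem_closure_iff_nhds]
    intro t ht
    have hc : ContinuousAt (fun w : R => z + w) 0 := (continuous_const.add continuous_id).continuousAt
    have hs : (fun w : R => z + w) ⁻¹' t ∈ 𝓝 (0 : R) := by
      apply hc.preimage_mem_nhds; simpa using ht
    obtain ⟨I, hIs, hI⟩ := hlin _ hs
    refine ⟨0, ?_, rfl⟩
    have h1 : (-z : R) ∈ I := I.neg_mem (hz I hI)
    have := hIs h1
    simpa using this
  simpa using hcl

lemma tsum_mem_closure {ι : Type*} {g : ι → R} (hg : Summable g) (J : Ideal R)
    (h : ∀ i, g i ∈ J) : ∑' i, g i ∈ closure (J : Set R) := by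
  refine mem_closure_of_tendsto hg.hasSum (Filter.Eventually.of_forall fun s => ?_)
  exact Ideal.sum_mem J fun i _ => h i

lemma tsum_mem_of_isClosed {ι : Type*} {g : ι → R} (hg : Summable g) (J : Ideal R)
    (hJ : IsClosed (J : Set R)) (h : ∀ i, g i ∈ J) : ∑' i, g i ∈ J := by
  have := tsum_mem_closure hg J h
  rwa [hJ.closure_eq] at this

lemma summable_of_ideal
    (hlin : ∀ s ∈ 𝓝 (0 : R), ∃ I : Ideal R, (I : Set R) ⊆ s ∧ (I : Set R) ∈ 𝓝 0)
    {ι : Type*} {g : ι → R}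
    (h : ∀ I : Ideal R, (I : Set R) ∈ 𝓝 0 → ∀ᶠ i in cofinite, g i ∈ I) : Summable g := by
  classical
  rw [summable_iff_vanishing]
  intro e he
  obtain ⟨I, hIe, hI⟩ := hlin e he
  have hfin : {i | ¬ g i ∈ I}.Finite := by
    have := h I hI
    rwa [Filter.eventually_cofinite] at this
  refine ⟨hfin.toFinset, fun t ht => ?_⟩
  apply hIe
  refine Ideal.sum_mem I fun i hi => ?_
  by_contra hgi
  exact (Finset.disjoint_left.mp ht hi) (hfin.mem_toFinset.mpr hgi)

end Basic

section Mon
variable {R : Type*} [CommRing R] {n : ℕ}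

noncomputable def mon (x : Fin n → R) (d : Fin n →₀ ℕ) : R := ∏ i, x i ^ d i

def deg (d : Fin n →₀ ℕ) : ℕ := ∑ i, d i

lemma deg_eq_zero {d : Fin n →₀ ℕ} (h : deg d = 0) : d = 0 := by
  ext i
  have := Finset.sum_eq_zero_iff.mp h i (Finset.mem_univ i)
  simpa using this

lemma mon_zero (x : Fin n → R) : mon x 0 = 1 := by simp [mon]

lemma mon_single (x : Fin n → R) (j : Fin n) : mon x (Finsupp.single j 1) = x j := by
  classical
  rw [mon, Finset.prod_eq_single j]
  · simp
  · intro b _ hb; simp [Finsupp.single_apply, Ne.symm hb]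
  · simp

lemma deg_single (j : Fin n) : deg (Finsupp.single j (1:ℕ)) = 1 := by
  simp [deg, Finsupp.single_apply]

lemma deg_eq_one {d : Fin n →₀ ℕ} (h : deg d = 1) : ∃ j, d = Finsupp.single j 1 := by
  classical
  have hex : ∃ j, d j ≠ 0 := by
    by_contra hc
    push_neg at hc
    have : d = 0 := by ext i; exact hc i
    rw [this] at h
    simp [deg] at h
  obtain ⟨j, hj⟩ := hex
  have hsplit : deg d = d j + ∑ k ∈ Finset.univ.erase j, d k :=
    (Finset.add_sum_erase Finset.univ _ (Finset.mem_univ j)).symm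
  have hdj : d j = 1 := by omega
  have hrest : ∑ k ∈ Finset.univ.erase j, d k = 0 := by omega
  refine ⟨j, ?_⟩
  ext k
  rcases eq_or_ne k j with rfl | hk
  · simp [hdj]
  · have := Finset.sum_eq_zero_iff.mp hrest k (Finset.mem_erase.mpr ⟨hk, Finset.mem_univ k⟩)
    simp [Finsupp.single_apply, Ne.symm hk, this]

lemma mon_peel (x : Fin n → R) {d : Fin n →₀ ℕ} {i : Fin n} (hi : d i ≠ 0) :
    mon x d = x i * mon x (Finsupp.update d i (d i - 1)) ∧
      deg d = deg (Finsupp.update d i (d i - 1)) + 1 := by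
  classical
  set d' := Finsupp.update d i (d i - 1) with hd'
  have hdi : d i = (d i - 1) + 1 := (Nat.succ_pred_eq_of_pos (Nat.pos_of_ne_zero hi)).symm
  have hdj : ∀ j, j ≠ i → d' j = d j := by
    intro j hj
    simp [hd', Function.update_of_ne hj]
  have hdii : d' i = d i - 1 := by simp [hd']
  have h1 : mon x d = x i ^ d i * ∏ j ∈ Finset.univ.erase i, x j ^ d j :=
    (Finset.mul_prod_erase Finset.univ _ (Finset.mem_univ i)).symm
  have h2 : mon x d' = x i ^ (d i - 1) * ∏ j ∈ Finset.univ.erase i, x j ^ d j := by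
    rw [mon, ← Finset.mul_prod_erase Finset.univ _ (Finset.mem_univ i), hdii]
    congr 1
    exact Finset.prod_congr rfl fun j hj => by rw [hdj j (Finset.mem_erase.mp hj).1]
  constructor
  · rw [h1, h2, ← mul_assoc]
    congr 1
    conv_lhs => rw [hdi]
    rw [pow_succ]; ring
  · have e1 : deg d = d i + ∑ j ∈ Finset.univ.erase i, d j :=
      (Finset.add_sum_erase Finset.univ _ (Finset.mem_univ i)).symm
    have e2 : deg d' = (d i - 1) + ∑ j ∈ Finset.univ.erase i, d j := by
      rw [deg, ← Finset.add_sum_erase Finset.univ _ (Finset.mem_univ i), hdii]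
      congr 1
      exact Finset.sum_congr rfl fun j hj => hdj j (Finset.mem_erase.mp hj).1
    omega

lemma mon_mem (q : Ideal R) {x : Fin n → R} (hx : ∀ i, x i ∈ q) {d : Fin n →₀ ℕ}
    (hd : d ≠ 0) : mon x d ∈ q := by
  classical
  have hex : ∃ i, d i ≠ 0 := by
    by_contra h
    push_neg at h
    exact hd (by ext i; exact h i)
  obtain ⟨i, hi⟩ := hex
  obtain ⟨h1, -⟩ := mon_peel x hi
  rw [h1]
  exact Ideal.mul_mem_right _ q (hx i)

lemma mon_sub_mem (E : Ideal R) {u v : Fin n → R} (hE : ∀ i, u i - v i ∈ E) :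
    ∀ (k : ℕ) (d : Fin n →₀ ℕ), deg d = k → mon u d - mon v d ∈ E := by
  intro k
  induction k using Nat.strong_induction_on with
  | _ k IH =>
    intro d hd
    rcases Nat.eq_zero_or_pos k with hk | hk
    · subst hk
      rw [deg_eq_zero hd, mon_zero, mon_zero, sub_self]
      exact E.zero_mem
    · have hex : ∃ i, d i ≠ 0 := by
        by_contra h
        push_neg at h
        have : d = 0 := by ext i; exact h i
        rw [this] at hd
        simp [deg] at hd
        omega
      obtain ⟨i, hi⟩ := hex
      obtain ⟨h1, h2⟩ := mon_peel u hi
      obtain ⟨h1', -⟩ := mon_peel v hi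
      set d' := Finsupp.update d i (d i - 1)
      have key : mon u d - mon v d
          = (u i - v i) * mon u d' + v i * (mon u d' - mon v d') := by
        rw [h1, h1']; ring
      rw [key]
      refine E.add_mem (Ideal.mul_mem_right _ E (hE i)) (Ideal.mul_mem_left E _ ?_)
      exact IH (deg d') (by omega) d' rfl

lemma mon_sub_mem_mul (q E : Ideal R) {u v : Fin n → R} (hu : ∀ i, u i ∈ q) (hv : ∀ i, v i ∈ q)
    (hE : ∀ i, u i - v i ∈ E) {d : Fin n →₀ ℕ} (hd : 2 ≤ deg d) :
    mon u d - mon v d ∈ q * E := by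
  classical
  have hex : ∃ i, d i ≠ 0 := by
    by_contra h
    push_neg at h
    have : d = 0 := by ext i; exact h i
    rw [this] at hd
    simp [deg] at hd
  obtain ⟨i, hi⟩ := hex
  obtain ⟨h1, h2⟩ := mon_peel u hi
  obtain ⟨h1', -⟩ := mon_peel v hi
  set d' := Finsupp.update d i (d i - 1)
  have hd' : d' ≠ 0 := by
    intro h0
    rw [h0, show deg (0 : Fin n →₀ ℕ) = 0 from by simp [deg]] at h2
    omega
  have key : mon u d - mon v d
      = mon u d' * (u i - v i) + v i * (mon u d' - mon v d') := by
    rw [h1, h1']; ring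
  rw [key]
  exact Ideal.add_mem _ (Ideal.mul_mem_mul (mon_mem q hu hd') (hE i))
    (Ideal.mul_mem_mul (hv i) (mon_sub_mem E hE (deg d') d' rfl))

end Mon

section Eval
variable {R : Type*} [CommRing R] [UniformSpace R] [IsUniformAddGroup R] [IsTopologicalRing R]
    [T2Space R] [CompleteSpace R] {n : ℕ}

variable (hlin : ∀ s ∈ 𝓝 (0 : R), ∃ I : Ideal R, (I : Set R) ⊆ s ∧ (I : Set R) ∈ 𝓝 0)
variable {c : (Fin n →₀ ℕ) → R} (hc : Tendsto c cofinite (𝓝 0))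

lemma eval_zero (c : (Fin n →₀ ℕ) → R) :
    ∑' d, c d * mon (fun _ => (0:R) : Fin n → R) d = c 0 := by
  rw [tsum_eq_single 0 (by
    intro d hd
    have hex : ∃ i, d i ≠ 0 := by
      by_contra h
      push_neg at h
      exact hd (by ext i; exact h i)
    obtain ⟨i, hi⟩ := hex
    have : mon (fun _ => (0:R) : Fin n → R) d = 0 :=
      Finset.prod_eq_zero (Finset.mem_univ i) (zero_pow hi)
    rw [this, mul_zero])]
  rw [mon_zero, mul_one]

include hlin hc

lemma summable_eval (x : Fin n → R) : Summable fun d => c d * mon x d := by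
  apply summable_of_ideal hlin
  intro I hI
  filter_upwards [hc (hI : (I : Set R) ∈ 𝓝 0)] with d hd
  exact Ideal.mul_mem_right _ I hd

lemma eval_mem (Q : Ideal R) (hQ : IsClosed (Q : Set R)) (hc0 : c 0 ∈ Q)
    {x : Fin n → R} (hx : ∀ i, x i ∈ Q) : ∑' d, c d * mon x d ∈ Q := by
  refine tsum_mem_of_isClosed (summable_eval hlin hc x) Q hQ fun d => ?_
  rcases eq_or_ne d 0 with rfl | hd
  · rw [mon_zero, mul_one]; exact hc0
  · exact Ideal.mul_mem_left Q _ (mon_mem Q hx hd)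

lemma eval_diff (q E : Ideal R) {x x' : Fin n → R} (hx : ∀ i, x i ∈ q) (hx' : ∀ i, x' i ∈ q)
    (hE : ∀ i, x i - x' i ∈ E) :
    (∑' d, c d * mon x d) - (∑' d, c d * mon x' d)
      - ∑ j, c (Finsupp.single j 1) * (x j - x' j) ∈ closure ((q * E : Ideal R) : Set R) := by
  classical
  set g : (Fin n →₀ ℕ) → R := fun d => c d * (mon x d - mon x' d) with hgdef
  have S1 := summable_eval hlin hc x
  have S2 := summable_eval hlin hc x'
  have hg : Summable g := by
    have : g = fun d => c d * mon x d - c d * mon x' d := by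
      funext d; rw [hgdef]; ring
    rw [this]
    exact S1.sub S2
  have hsub : (∑' d, c d * mon x d) - (∑' d, c d * mon x' d) = ∑' d, g d := by
    rw [← S1.tsum_sub S2]
    congr 1; funext d; rw [hgdef]; ring
  set g'' : (Fin n →₀ ℕ) → R := fun d => if 2 ≤ deg d then 0 else g d with hg''def
  set g' : (Fin n →₀ ℕ) → R := fun d => if 2 ≤ deg d then g d else 0 with hg'def
  set T : Finset (Fin n →₀ ℕ) :=
    insert 0 (Finset.image (fun j => Finsupp.single j (1:ℕ)) Finset.univ) with hT
  have hTsupp : ∀ d ∉ T, g'' d = 0 := by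
    intro d hd
    rcases le_or_gt 2 (deg d) with h2 | h2
    · simp only [hg''def, if_pos h2]
    · exfalso
      apply hd
      have : deg d = 0 ∨ deg d = 1 := by omega
      rcases this with h | h
      · rw [hT, deg_eq_zero h]
        exact Finset.mem_insert_self _ _
      · obtain ⟨j, rfl⟩ := deg_eq_one h
        rw [hT]
        exact Finset.mem_insert_of_mem
          (Finset.mem_image.mpr ⟨j, Finset.mem_univ j, rfl⟩)
  have hS'' : Summable g'' := summable_of_ne_finset_zero hTsupp
  have hgsplit : ∀ d, g' d = g d - g'' d := by
    intro d
    rw [hg'def, hg''def]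
    by_cases h2 : 2 ≤ deg d <;> simp [h2]
  have hS' : Summable g' := by
    have : g' = fun d => g d - g'' d := funext hgsplit
    rw [this]
    exact hg.sub hS''
  have htsum'' : ∑' d, g'' d = ∑ j, c (Finsupp.single j 1) * (x j - x' j) := by
    rw [tsum_eq_sum hTsupp, hT]
    have h0T : (0 : Fin n →₀ ℕ) ∉ Finset.image (fun j => Finsupp.single j (1:ℕ)) Finset.univ := by
      simp only [Finset.mem_image, not_exists]
      intro j
      intro h
      have := h.2
      have h1 : (Finsupp.single j (1:ℕ)) j = 0 := by rw [this]; rfl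
      simp at h1
    rw [Finset.sum_insert h0T]
    have hg''0 : g'' 0 = 0 := by
      have hd0 : deg (0 : Fin n →₀ ℕ) = 0 := by simp [deg]
      simp [hg''def, hgdef, hd0, mon_zero]
    rw [hg''0, zero_add]
    rw [Finset.sum_image (fun a _ b _ h => Finsupp.single_left_injective one_ne_zero h)]
    apply Finset.sum_congr rfl
    intro j _
    have hd1 : ¬ (2 ≤ deg (Finsupp.single j (1:ℕ))) := by rw [deg_single]; omega
    simp [hg''def, hgdef, hd1, mon_single]
  have htsum' : ∑' d, g' d ∈ closure ((q * E : Ideal R) : Set R) := by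
    refine tsum_mem_closure hS' (q * E) fun d => ?_
    by_cases h2 : 2 ≤ deg d
    · have hgd : g' d = c d * (mon x d - mon x' d) := by simp [hg'def, hgdef, h2]
      rw [hgd]
      exact Ideal.mul_mem_left _ _ (mon_sub_mem_mul q E hx hx' hE h2)
    · have hgd : g' d = 0 := by simp [hg'def, h2]
      rw [hgd]
      exact Ideal.zero_mem _
  have hfinal : (∑' d, c d * mon x d) - (∑' d, c d * mon x' d)
      - ∑ j, c (Finsupp.single j 1) * (x j - x' j) = ∑' d, g' d := by
    rw [hsub, ← htsum'']
    have : ∑' d, g d = (∑' d, g' d) + ∑' d, g'' d := by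
      rw [← hS'.tsum_add hS'']
      congr 1
      funext d
      rw [hgsplit d]
      ring
    rw [this]
    ring
  rw [hfinal]
  exact htsum'

end Eval

section Pow
variable {R : Type*} [CommRing R] [UniformSpace R] [IsUniformAddGroup R] [IsTopologicalRing R]
    [T2Space R] [CompleteSpace R]

lemma ideal_sum_le {ι : Type*} (s : Finset ι) (F : ι → Ideal R) (K : Ideal R)
    (h : ∀ i ∈ s, F i ≤ K) : ∑ i ∈ s, F i ≤ K := by
  classical
  induction s using Finset.induction_on with
  | empty => simp
  | insert a t hnot ih =>
    rw [Finset.sum_insert hnot, Submodule.add_eq_sup]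
    exact sup_le (h a (Finset.mem_insert_self a t)) (ih fun i hi => h i (Finset.mem_insert_of_mem hi))

lemma add_pow_le' (I J K : Ideal R) (a b : ℕ) (hI : I ^ a ≤ K) (hJ : J ^ b ≤ K) :
    (I + J) ^ (a + b) ≤ K := by
  rw [add_pow]
  apply ideal_sum_le
  intro k hk
  rcases le_or_gt a k with h | h
  · calc I ^ k * J ^ (a + b - k) * (((a+b).choose k : ℕ) : Ideal R)
        ≤ I ^ k * J ^ (a + b - k) := Ideal.mul_le_left
      _ ≤ I ^ k := Ideal.mul_le_left
      _ ≤ I ^ a := Ideal.pow_le_pow_right h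
      _ ≤ K := hI
  · have hbk : b ≤ a + b - k := by omega
    calc I ^ k * J ^ (a + b - k) * (((a+b).choose k : ℕ) : Ideal R)
        ≤ I ^ k * J ^ (a + b - k) := Ideal.mul_le_left
      _ ≤ J ^ (a + b - k) := Ideal.mul_le_right
      _ ≤ J ^ b := Ideal.pow_le_pow_right hbk
      _ ≤ K := hJ

lemma span_pow_le {S : Set R} (hfin : S.Finite)
    (hS : ∀ a ∈ S, Tendsto (fun k : ℕ => a ^ k) atTop (𝓝 0))
    (I : Ideal R) (hI : (I : Set R) ∈ 𝓝 0) :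
    ∃ K : ℕ, ∀ k, K ≤ k → Ideal.span S ^ k ≤ I := by
  suffices h : ∃ K : ℕ, Ideal.span S ^ K ≤ I by
    obtain ⟨K, hK⟩ := h
    exact ⟨K, fun k hk => le_trans (Ideal.pow_le_pow_right hk) hK⟩
  revert hS
  refine Set.Finite.induction_on (motive := fun S _ =>
      (∀ a ∈ S, Tendsto (fun k : ℕ => a ^ k) atTop (𝓝 (0:R))) → ∃ K : ℕ, Ideal.span S ^ K ≤ I)
    S hfin (fun _ => ⟨1, by rw [Ideal.span_empty, pow_one]; exact bot_le⟩) ?_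
  intro a s hnot hsfin ih hS
  obtain ⟨Ks, hKs⟩ := ih fun b hb => hS b (Set.mem_insert_of_mem a hb)
  have ha := hS a (Set.mem_insert a s)
  have hev : ∀ᶠ k : ℕ in atTop, a ^ k ∈ I := ha hI
  obtain ⟨Na, hNa⟩ := hev.exists_forall_of_atTop
  refine ⟨Na + Ks, ?_⟩
  rw [Ideal.span_insert, ← Submodule.add_eq_sup]
  apply add_pow_le'
  · rw [Ideal.span_singleton_pow, Ideal.span_le, Set.singleton_subset_iff]
    exact hNa Na le_rfl
  · exact hKs

noncomputable def cl (J : Ideal R) : Ideal R := J.topologicalClosure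

lemma cl_coe (J : Ideal R) : (cl J : Set R) = closure (J : Set R) :=
  J.topologicalClosure_coe

lemma mem_cl {J : Ideal R} {z : R} : z ∈ cl J ↔ z ∈ closure (J : Set R) := by
  rw [← cl_coe]; rfl

lemma le_cl (J : Ideal R) : J ≤ cl J := Submodule.le_topologicalClosure J

lemma cl_isClosed (J : Ideal R) : IsClosed ((cl J : Ideal R) : Set R) := by
  rw [cl_coe]; exact isClosed_closure

lemma cl_le_of_le {J I : Ideal R} (h : J ≤ I) (hI : IsClosed (I : Set R)) : cl J ≤ I := by
  intro z hz
  rw [mem_cl] at hz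
  exact (closure_minimal h hI) hz

lemma cl_cl_le (J : Ideal R) : cl (cl J) ≤ cl J :=
  cl_le_of_le le_rfl (cl_isClosed J)

lemma mul_cl_le (J J' : Ideal R) : J * cl J' ≤ cl (J * J') := by
  rw [Ideal.mul_le]
  intro r hr s hs
  rw [mem_cl] at hs ⊢
  exact map_mem_closure (continuous_const.mul continuous_id) hs
    fun z hz => Ideal.mul_mem_mul hr hz

lemma cl_mul_le (J J' : Ideal R) : cl J * J' ≤ cl (J * J') := by
  rw [Ideal.mul_le]
  intro r hr s hs
  rw [mem_cl] at hr ⊢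
  have hcont : Continuous fun z : R => z * s := continuous_id.mul continuous_const
  exact map_mem_closure (f := fun z : R => z * s) hcont hr fun z hz => Ideal.mul_mem_mul hz hs

lemma cl_mono {J J' : Ideal R} (h : J ≤ J') : cl J ≤ cl J' :=
  Submodule.topologicalClosure_mono h

lemma cl_le_add {J I : Ideal R} (hI : (I : Set R) ∈ 𝓝 0) : cl J ≤ J + I := by
  intro z hz
  rw [mem_cl, mem_closure_iff_nhds] at hz
  have hnz : {w : R | w - z ∈ I} ∈ 𝓝 z := by
    have hc : ContinuousAt (fun w : R => w - z) z := (continuous_id.sub continuous_const).continuousAt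
    have : (fun w : R => w - z) ⁻¹' (I : Set R) ∈ 𝓝 z := hc.preimage_mem_nhds (by simpa using hI)
    exact this
  obtain ⟨w, hw1, hw2⟩ := hz _ hnz
  rw [Submodule.add_eq_sup, Submodule.mem_sup]
  exact ⟨w, hw2, -(w - z), I.neg_mem hw1, by ring⟩

lemma exists_tendsto_partial_sums
    (hlin : ∀ s ∈ 𝓝 (0 : R), ∃ I : Ideal R, (I : Set R) ⊆ s ∧ (I : Set R) ∈ 𝓝 0)
    {d : ℕ → R} (h : ∀ I : Ideal R, (I : Set R) ∈ 𝓝 0 → ∀ᶠ k in atTop, d k ∈ I) :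
    ∃ L, Tendsto (fun K => ∑ k ∈ Finset.range K, d k) atTop (𝓝 L) := by
  have hs : Summable d := by
    apply summable_of_ideal hlin
    intro I hI
    rw [Nat.cofinite_eq_atTop]
    exact h I hI
  exact ⟨∑' k, d k, hs.hasSum.tendsto_sum_nat⟩

end Pow
end RPS

/-- Let `R` be a linearly topologized, Hausdorff, complete (commutative
topological) ring and `m` a closed ideal of `R` all of whose elements are topologically
nilpotent.  Let `f` be an `n`-tuple of restricted power series in `n` variables (i.e. with
coefficients tending to `0`) whose constant terms lie in `m` and whose Jacobian determinant
at the origin (the determinant of the matrix of linear coefficients) is a unit of `R`.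
Then `f` induces a bijection of `m^n` onto itself. -/
theorem restricted_power_series_bijOn_ideal_pow
    {R : Type*} [CommRing R] [UniformSpace R] [IsUniformAddGroup R] [IsTopologicalRing R]
    [T2Space R] [CompleteSpace R]
    (hlin : ∀ s ∈ 𝓝 (0 : R), ∃ I : Ideal R, (I : Set R) ⊆ s ∧ (I : Set R) ∈ 𝓝 (0 : R))
    (m : Ideal R) (hm_closed : IsClosed (m : Set R))
    (hm_nilp : ∀ a ∈ m, Tendsto (fun k : ℕ => a ^ k) atTop (𝓝 0))
    {n : ℕ} (f : Fin n → MvPowerSeries (Fin n) R)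
    (hf_restricted : ∀ i,
      Tendsto (fun d : Fin n →₀ ℕ => MvPowerSeries.coeff d (f i)) cofinite (𝓝 0))
    (hf0 : ∀ i, MvPowerSeries.constantCoeff (f i) ∈ m)
    (hJ : IsUnit (Matrix.det
      (Matrix.of fun i j : Fin n => MvPowerSeries.coeff (Finsupp.single j 1) (f i)))) :
    Set.BijOn (fun x : Fin n → R => fun i => MvPowerSeries.evalAt (f i) x)
      {x : Fin n → R | ∀ i, x i ∈ m} {x : Fin n → R | ∀ i, x i ∈ m} := by
  classical
  open RPS in
  set A : Matrix (Fin n) (Fin n) R :=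
    Matrix.of fun i j : Fin n => MvPowerSeries.coeff (Finsupp.single j 1) (f i) with hA
  set B : Matrix (Fin n) (Fin n) R := A⁻¹ with hB
  have hBA : B * A = 1 := Matrix.nonsing_inv_mul A hJ
  have hAB : A * B = 1 := Matrix.mul_nonsing_inv A hJ
  have hinvgen : ∀ (M N : Matrix (Fin n) (Fin n) R), M * N = 1 →
      ∀ w : Fin n → R, ∀ i, (∑ j, M i j * (∑ l, N j l * w l)) = w i := by
    intro M N hMN w i
    have h1 : ∀ j, M i j * (∑ l, N j l * w l) = ∑ l, M i j * N j l * w l := by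
      intro j; rw [Finset.mul_sum]
      exact Finset.sum_congr rfl fun l _ => (mul_assoc _ _ _).symm
    simp_rw [h1]
    rw [Finset.sum_comm]
    have h2 : ∀ l, (∑ j, M i j * N j l * w l) = (M * N) i l * w l := by
      intro l; rw [Matrix.mul_apply, Finset.sum_mul]
    simp_rw [h2, hMN]
    simp [Matrix.one_apply]
  have hinv : ∀ w : Fin n → R, ∀ i, (∑ j, B i j * (∑ l, A j l * w l)) = w i := hinvgen B A hBA
  have heval : ∀ (x : Fin n → R) (i : Fin n),
      MvPowerSeries.evalAt (f i) x = ∑' d, MvPowerSeries.coeff d (f i) * RPS.mon x d :=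
    fun x i => rfl
  have hc0 : ∀ i, MvPowerSeries.coeff 0 (f i) ∈ m := by
    intro i
    rw [MvPowerSeries.coeff_zero_eq_constantCoeff]
    exact hf0 i
  -- the evaluation map
  set F : (Fin n → R) → (Fin n → R) := fun x i => MvPowerSeries.evalAt (f i) x with hF
  have hmapsto : Set.MapsTo F {x : Fin n → R | ∀ i, x i ∈ m} {x : Fin n → R | ∀ i, x i ∈ m} := by
    intro x hx i
    simp only [Set.mem_setOf_eq] at hx
    show MvPowerSeries.evalAt (f i) x ∈ m
    rw [heval]
    exact eval_mem hlin (hf_restricted i) m hm_closed (hc0 i) hx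
  refine ⟨hmapsto, ?_, ?_⟩
  · -- injectivity
    intro x hx x' hx' hxy
    simp only [Set.mem_setOf_eq] at hx hx'
    set E : Ideal R := Ideal.span (Set.range fun i => x i - x' i) with hE
    set q : Ideal R := Ideal.span (Set.range x ∪ Set.range x') with hq
    have hxq : ∀ i, x i ∈ q := fun i =>
      Ideal.subset_span (Set.mem_union_left _ (Set.mem_range_self i))
    have hx'q : ∀ i, x' i ∈ q := fun i =>
      Ideal.subset_span (Set.mem_union_right _ (Set.mem_range_self i))
    have hdE : ∀ i, x i - x' i ∈ E := fun i => Ideal.subset_span (Set.mem_range_self i)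
    have hdiff : ∀ i, (∑ j, A i j * (x j - x' j)) ∈ cl (q * E) := by
      intro i
      have h0 := eval_diff hlin (hf_restricted i) q E hxq hx'q hdE
      have hFeq : MvPowerSeries.evalAt (f i) x = MvPowerSeries.evalAt (f i) x' := congrFun hxy i
      rw [heval x i, heval x' i] at hFeq
      rw [hFeq, sub_self, zero_sub] at h0
      have := (cl (q * E)).neg_mem (mem_cl.mpr h0)
      simpa [hA] using this
    have hΔ : ∀ i, x i - x' i ∈ cl (q * E) := by
      intro i
      have := hinv (fun j => x j - x' j) i
      rw [← this]
      exact Ideal.sum_mem _ fun j _ => Ideal.mul_mem_left _ _ (hdiff j)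
    have hEle : E ≤ cl (q * E) := by
      rw [hE, Ideal.span_le]
      rintro z ⟨i, rfl⟩
      exact hΔ i
    -- Nakayama-type iteration
    have hqm : ∀ a ∈ (Set.range x ∪ Set.range x'), Tendsto (fun k : ℕ => a ^ k) atTop (𝓝 (0:R)) := by
      rintro a (⟨i, rfl⟩ | ⟨i, rfl⟩)
      · exact hm_nilp _ (hx i)
      · exact hm_nilp _ (hx' i)
    have hmain : ∀ i, x i - x' i = 0 := by
      intro i
      apply eq_zero_of_forall_mem hlin
      intro I hI
      obtain ⟨I', hI'sub, hI'nhd, hI'open, hI'closed⟩ := exists_openIdeal hlin hI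
      obtain ⟨K, hK⟩ := span_pow_le ((Set.finite_range x).union (Set.finite_range x')) hqm I' hI'nhd
      have hstep : ∀ k : ℕ, E ≤ q ^ k * E + I' := by
        intro k
        induction k with
        | zero =>
          rw [pow_zero, one_mul, Submodule.add_eq_sup]
          exact le_sup_left
        | succ k ih =>
          have h1 : E ≤ q * E + I' := le_trans hEle (cl_le_add hI'nhd)
          have h2 : q ^ k * E ≤ q ^ (k+1) * E + I' := by
            calc q ^ k * E ≤ q ^ k * (q * E + I') := Ideal.mul_mono_right h1
              _ = q ^ k * (q * E) + q ^ k * I' := by rw [mul_add]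
              _ ≤ q ^ (k+1) * E + I' := by
                  rw [Submodule.add_eq_sup, Submodule.add_eq_sup]
                  apply sup_le_sup
                  · rw [← mul_assoc, ← pow_succ]
                  · exact Ideal.mul_le_right
          calc E ≤ q ^ k * E + I' := ih
            _ ≤ (q ^ (k+1) * E + I') + I' := by
                rw [Submodule.add_eq_sup, Submodule.add_eq_sup, Submodule.add_eq_sup]
                exact sup_le_sup h2 le_rfl
            _ = q ^ (k+1) * E + I' := by
                rw [Submodule.add_eq_sup, Submodule.add_eq_sup, sup_assoc, sup_idem]
      have hfin : E ≤ I' := by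
        have := hstep K
        have hqK : q ^ K * E ≤ I' := le_trans Ideal.mul_le_left (hK K le_rfl)
        calc E ≤ q ^ K * E + I' := this
          _ ≤ I' + I' := by
              rw [Submodule.add_eq_sup, Submodule.add_eq_sup]
              exact sup_le_sup hqK le_rfl
          _ = I' := by rw [Submodule.add_eq_sup, sup_idem]
      exact hI'sub (hfin (hdE i))
    funext i
    exact sub_eq_zero.mp (hmain i)
  · -- surjectivity
    intro y hy
    simp only [Set.mem_setOf_eq] at hy
    let xs : ℕ → Fin n → R := fun k => Nat.rec (motive := fun _ => Fin n → R) (fun _ => 0)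
      (fun _ u i => u i - ∑ j, B i j * (MvPowerSeries.evalAt (f j) u - y j)) k
    let Fv : ℕ → Fin n → R := fun k j => MvPowerSeries.evalAt (f j) (xs k)
    let D : ℕ → Fin n → R := fun k i => xs (k + 1) i - xs k i
    have hxs0 : ∀ i, xs 0 i = 0 := fun i => rfl
    have hxs_eq : ∀ k i, xs (k + 1) i = xs k i - ∑ j, B i j * (Fv k j - y j) := fun k i => rfl
    have hD : ∀ k i, D k i = xs (k + 1) i - xs k i := fun k i => rfl
    set q0 : Ideal R :=
      Ideal.span (Set.range y ∪ Set.range fun j => MvPowerSeries.coeff 0 (f j)) with hq0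
    have hyq0 : ∀ j, y j ∈ q0 := fun j =>
      Ideal.subset_span (Set.mem_union_left _ ⟨j, rfl⟩)
    have hcq0 : ∀ j, MvPowerSeries.coeff 0 (f j) ∈ q0 := fun j =>
      Ideal.subset_span (Set.mem_union_right _ ⟨j, rfl⟩)
    set Q : Ideal R := cl q0 with hQdef
    have hq0m : q0 ≤ m := by
      rw [hq0, Ideal.span_le]
      rintro z (⟨j, rfl⟩ | ⟨j, rfl⟩)
      · exact hy j
      · exact hc0 j
    have hQm : Q ≤ m := cl_le_of_le hq0m hm_closed
    have hQclosed : IsClosed (Q : Set R) := cl_isClosed q0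
    have hq0fin : (Set.range y ∪ Set.range fun j => MvPowerSeries.coeff 0 (f j)).Finite :=
      (Set.finite_range y).union (Set.finite_range _)
    have hq0nilp : ∀ a ∈ (Set.range y ∪ Set.range fun j => MvPowerSeries.coeff 0 (f j)),
        Tendsto (fun k : ℕ => a ^ k) atTop (𝓝 (0:R)) := by
      rintro a (⟨j, rfl⟩ | ⟨j, rfl⟩)
      · exact hm_nilp _ (hy j)
      · exact hm_nilp _ (hc0 j)
    -- iterates have entries in Q
    have hxsQ : ∀ k i, xs k i ∈ Q := by
      intro k
      induction k with
      | zero =>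
        intro i
        rw [hxs0 i]
        exact Q.zero_mem
      | succ k ih =>
        intro i
        rw [hxs_eq k i]
        refine Ideal.sub_mem _ (ih i) (Ideal.sum_mem _ fun j _ => Ideal.mul_mem_left _ _
          (Ideal.sub_mem _ ?_ (le_cl q0 (hyq0 j))))
        show MvPowerSeries.evalAt (f j) (xs k) ∈ Q
        rw [heval]
        exact eval_mem hlin (hf_restricted j) Q hQclosed (le_cl q0 (hcq0 j)) ih
    -- difference estimates
    have hDmem : ∀ k i, D k i ∈ cl (q0 ^ (k + 1)) := by
      intro k
      induction k with
      | zero =>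
        intro i
        have hF0 : ∀ j, Fv 0 j = MvPowerSeries.coeff 0 (f j) := by
          intro j
          show MvPowerSeries.evalAt (f j) (xs 0) = _
          rw [heval]
          exact eval_zero _
        have e0 : D 0 i = -∑ j, B i j * (MvPowerSeries.coeff 0 (f j) - y j) := by
          rw [hD, hxs_eq 0 i, hxs0 i]
          rw [Finset.sum_congr rfl fun j _ => by rw [hF0 j]]
          ring
        rw [e0, pow_one]
        refine (cl q0).neg_mem (le_cl q0 (Ideal.sum_mem _ fun j _ => Ideal.mul_mem_left _ _
          (Ideal.sub_mem _ (hcq0 j) (hyq0 j))))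
      | succ k ih =>
        intro i
        set Ek : Ideal R := Ideal.span (Set.range (D k)) with hEk
        have hEkle : Ek ≤ cl (q0 ^ (k + 1)) := by
          rw [hEk, Ideal.span_le]
          rintro z ⟨l, rfl⟩
          exact ih l
        have hr : ∀ i', Fv (k+1) i' - Fv k i' - ∑ j, A i' j * D k j
            ∈ closure ((Q * Ek : Ideal R) : Set R) :=
          fun i' => eval_diff hlin (hf_restricted i') Q Ek (hxsQ (k+1)) (hxsQ k)
            (fun l => Ideal.subset_span ⟨l, rfl⟩)
        have hD2 : ∀ k' i', D k' i' = -∑ j, B i' j * (Fv k' j - y j) := by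
          intro k' i'
          rw [hD, hxs_eq k' i']
          ring
        have key : D (k+1) i = -∑ j, B i j *
            (Fv (k+1) j - Fv k j - ∑ l, A j l * D k l) := by
          rw [hD2 (k+1) i]
          have expand : ∀ j, B i j * (Fv (k+1) j - y j)
              = B i j * (Fv k j - y j) + B i j * (∑ l, A j l * D k l)
                + B i j * (Fv (k+1) j - Fv k j - ∑ l, A j l * D k l) := by
            intro j; ring
          rw [Finset.sum_congr rfl fun j _ => expand j]
          rw [Finset.sum_add_distrib, Finset.sum_add_distrib]
          rw [hinv (D k) i]
          have e2 : ∑ j, B i j * (Fv k j - y j) = -D k i := by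
            rw [hD2 k i]; ring
          rw [e2]
          ring
        have hchain : cl (Q * Ek) ≤ cl (q0 ^ (k + 2)) := by
          have h1 : Q * Ek ≤ cl (q0 * Ek) := cl_mul_le q0 Ek
          have h2 : q0 * Ek ≤ cl (q0 ^ (k + 2)) := by
            calc q0 * Ek ≤ q0 * cl (q0 ^ (k + 1)) := Ideal.mul_mono_right hEkle
              _ ≤ cl (q0 * q0 ^ (k + 1)) := mul_cl_le _ _
              _ = cl (q0 ^ (k + 2)) := by rw [← pow_succ']
          calc cl (Q * Ek) ≤ cl (cl (q0 * Ek)) := cl_mono h1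
            _ ≤ cl (q0 * Ek) := cl_cl_le _
            _ ≤ cl (cl (q0 ^ (k + 2))) := cl_mono h2
            _ ≤ cl (q0 ^ (k + 2)) := cl_cl_le _
        rw [key]
        exact (cl (q0 ^ (k+2))).neg_mem (Ideal.sum_mem _ fun j _ =>
          Ideal.mul_mem_left _ _ (hchain (mem_cl.mpr (hr j))))
    -- convergence of the iterates
    have hDev : ∀ i, ∀ I : Ideal R, (I : Set R) ∈ 𝓝 0 → ∀ᶠ k in atTop, D k i ∈ I := by
      intro i I hI
      obtain ⟨I', hsub, hnhd, -, hclosed⟩ := exists_openIdeal hlin hI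
      obtain ⟨K, hK⟩ := span_pow_le hq0fin hq0nilp I' hnhd
      filter_upwards [eventually_ge_atTop K] with k hk
      exact hsub (cl_le_of_le (hK (k+1) (by omega)) hclosed (hDmem k i))
    have hpartial : ∀ i K, ∑ k ∈ Finset.range K, D k i = xs K i := by
      intro i K
      induction K with
      | zero => simp [hxs0 i]
      | succ K ihK =>
        rw [Finset.sum_range_succ, ihK, hD]
        ring
    choose L hL using fun i => exists_tendsto_partial_sums hlin (hDev i)
    have hLtend : ∀ i, Tendsto (fun K => xs K i) atTop (𝓝 (L i)) := by
      intro i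
      have heq : (fun K => ∑ k ∈ Finset.range K, D k i) = fun K => xs K i :=
        funext (hpartial i)
      have := hL i
      rwa [heq] at this
    have hLm : ∀ i, L i ∈ m := fun i =>
      hm_closed.mem_of_tendsto (hLtend i)
        (Filter.Eventually.of_forall fun k => hQm (hxsQ k i))
    refine ⟨L, hLm, ?_⟩
    funext i
    show MvPowerSeries.evalAt (f i) L = y i
    have hzero : MvPowerSeries.evalAt (f i) L - y i = 0 := by
      apply eq_zero_of_forall_mem hlin
      intro I hI
      obtain ⟨I', hsub, hnhd, -, hclosed⟩ := exists_openIdeal hlin hI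
      obtain ⟨K, hK⟩ := span_pow_le hq0fin hq0nilp I' hnhd
      have htail : ∀ᶠ k in atTop, ∀ j, xs k j - L j ∈ I' := by
        rw [eventually_all]
        intro j
        have htd : Tendsto (fun k => xs k j - L j) atTop (𝓝 0) := by
          have := (hLtend j).sub (tendsto_const_nhds (x := L j))
          rwa [sub_self] at this
        exact htd.eventually (Filter.eventually_of_mem hnhd fun w hw => hw)
      obtain ⟨k, hk1, hk2⟩ := (htail.and (eventually_ge_atTop K)).exists
      have hDkI : ∀ l, D k l ∈ I' :=
        fun l => cl_le_of_le (hK (k+1) (by omega)) hclosed (hDmem k l)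
      -- F L close to F (xs k)
      have hdiffI : ∀ j, L j - xs k j ∈ I' := by
        intro j
        have := I'.neg_mem (hk1 j)
        rwa [neg_sub] at this
      have hpart1 : MvPowerSeries.evalAt (f i) L - Fv k i
          - ∑ j, A i j * (L j - xs k j) ∈ closure ((⊤ * I' : Ideal R) : Set R) :=
        eval_diff hlin (hf_restricted i) ⊤ I' (fun _ => trivial) (fun _ => trivial) hdiffI
      rw [Ideal.top_mul, hclosed.closure_eq] at hpart1
      have hlinpart : ∑ j, A i j * (L j - xs k j) ∈ I' :=
        Ideal.sum_mem _ fun j _ => Ideal.mul_mem_left _ _ (hdiffI j)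
      -- F (xs k) close to y
      have hD2 : ∀ i', D k i' = -∑ j, B i' j * (Fv k j - y j) := by
        intro i'
        rw [hD, hxs_eq k i']
        ring
      have e : ∑ l, A i l * D k l = -(Fv k i - y i) := by
        calc ∑ l, A i l * D k l
            = ∑ l, -(A i l * ∑ j, B l j * (Fv k j - y j)) :=
              Finset.sum_congr rfl fun l _ => by rw [hD2 l]; ring
          _ = -∑ l, A i l * ∑ j, B l j * (Fv k j - y j) := by
              rw [Finset.sum_neg_distrib]
          _ = -(Fv k i - y i) := by rw [hinvgen A B hAB (fun j => Fv k j - y j) i]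
      have hpart2 : Fv k i - y i ∈ I' := by
        have : Fv k i - y i = -∑ l, A i l * D k l := by rw [e]; ring
        rw [this]
        exact I'.neg_mem (Ideal.sum_mem _ fun l _ => Ideal.mul_mem_left _ _ (hDkI l))
      have hfin : MvPowerSeries.evalAt (f i) L - y i
          = (MvPowerSeries.evalAt (f i) L - Fv k i - ∑ j, A i j * (L j - xs k j))
            + ∑ j, A i j * (L j - xs k j) + (Fv k i - y i) := by ring
      rw [hfin]
      exact hsub (I'.add_mem (I'.add_mem hpart1 hlinpart) hpart2)
    exact sub_eq_zero.mp hzero
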